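/- (Strong comparison principle.) Let U₁ and U₂ be traveling waves with the same speed c, and suppose U₁(ξ) ≤ U₂(ξ) for all ξ ∈ ℝ. Then either U₁(ξ) = U₂(ξ) for all ξ ∈ ℝ, or U₁(ξ) < U₂(ξ) for all ξ ∈ ℝ. -/

import Mathlib

open Real Set Filter

noncomputable def delta1 (α : ℝ) : ℝ := Real.cos α
noncomputable def delta2 (α : ℝ) : ℝ := (1/2) * Real.cos α + (Real.sqrt 3 / 2) * Real.sin α
noncomputable def delta3 (α : ℝ) : ℝ := (1/2) * Real.cos α - (Real.sqrt 3 / 2) * Real.sin α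

/-- The function g_α(λ) from the minimal wave speed formula, with `a` playing the role of f'(0). -/
noncomputable def gfun (a α l : ℝ) : ℝ :=
  (1/6) * ((Real.exp (l * delta1 α) + Real.exp (-(l * delta1 α)))
    + (Real.exp (l * delta2 α) + Real.exp (-(l * delta2 α)))
    + (Real.exp (l * delta3 α) + Real.exp (-(l * delta3 α)))) - 1 + a

/-- The minimal wave speed c*(α) = inf_{λ>0} g_α(λ)/λ. -/
noncomputable def cstar (a α : ℝ) : ℝ := sInf {c : ℝ | ∃ l : ℝ, 0 < l ∧ c = gfun a α l / l}

/-- The discrete diffusion operator on the hexagonal lattice, in direction α. -/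
noncomputable def Dh (α : ℝ) (U : ℝ → ℝ) (ξ : ℝ) : ℝ :=
  (U (ξ + delta1 α) + U (ξ - delta1 α)) + (U (ξ + delta2 α) + U (ξ - delta2 α))
    + (U (ξ + delta3 α) + U (ξ - delta3 α)) - 6 * U ξ

/-- Fisher-KPP conditions: f is C¹ on [0,1] with derivative f', f(0)=f(1)=0, f'(0)>0,
and 0 < f(s) ≤ f'(0)·s on (0,1). -/
def FisherKPP (f f' : ℝ → ℝ) : Prop :=
  (∀ s ∈ Set.Icc (0:ℝ) 1, HasDerivAt f (f' s) s) ∧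
  ContinuousOn f' (Set.Icc (0:ℝ) 1) ∧
  f 0 = 0 ∧ f 1 = 0 ∧ 0 < f' 0 ∧
  (∀ s ∈ Set.Ioo (0:ℝ) 1, 0 < f s ∧ f s ≤ f' 0 * s)

/-- A traveling wave with speed c: a C¹ function U : ℝ → [0,1] solving
c·U′ = (1/6)·𝒟_h[U] + f(U) with limits 0 at −∞ and 1 at +∞. -/
def IsTravelingWave (α : ℝ) (f : ℝ → ℝ) (c : ℝ) (U : ℝ → ℝ) : Prop :=
  ContDiff ℝ 1 U ∧ (∀ ξ, U ξ ∈ Set.Icc (0:ℝ) 1) ∧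
  (∀ ξ, c * deriv U ξ = (1/6) * Dh α U ξ + f (U ξ)) ∧
  Filter.Tendsto U Filter.atBot (nhds 0) ∧ Filter.Tendsto U Filter.atTop (nhds 1)

/-! If the ordered waves touch at `ξ₀`, then `W = U₂ - U₁ ≥ 0` satisfies
`c W' + (1 + L) W ≥ 0` with `L` a Lipschitz constant of `f` on `[0, 1]`, so `exp ((1 + L) ξ / c) W`
is monotone and `W` vanishes on a half-line ending at `ξ₀`. At a zero of `W` the equation forces
`Dh W = 0`, hence `W` vanishes at the neighbours `ξ ± δₘ`, and these shifts carry the half-line of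
zeros over all of `ℝ`. The speed is nonzero: for `c = 0`, integrating the equation over `[-R, R]`
gives `∫ f(U) → 0` because the lattice differences telescope, whereas `f(U) ≥ 0` is positive
where `U = 1/2`. -/

open MeasureTheory Topology

theorem integral_shift_sub_eq {U : ℝ → ℝ} (hU : Continuous U) (d R : ℝ) :
    ∫ x in -R..R, (U (x + d) - U x) = ∫ t in 0..d, (U (t + R) - U (t + -R)) := by
  have hi : ∀ a b : ℝ, IntervalIntegrable U volume a b := fun a b => hU.intervalIntegrable a b
  have hshift : ∀ e a b : ℝ, IntervalIntegrable (fun x => U (x + e)) volume a b :=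
    fun e a b => (hU.comp (continuous_add_const e)).intervalIntegrable a b
  rw [intervalIntegral.integral_sub (hshift _ _ _) (hi _ _),
    intervalIntegral.integral_comp_add_right,
    intervalIntegral.integral_interval_sub_interval_comm' (hi _ _) (hi _ _) (hi _ _),
    intervalIntegral.integral_sub (hshift _ _ _) (hshift _ _ _),
    intervalIntegral.integral_comp_add_right, intervalIntegral.integral_comp_add_right]
  simp only [zero_add, add_comm d]

theorem tendsto_integral_shift_sub {U : ℝ → ℝ} (hU : Continuous U) {B : ℝ} (hB : ∀ x, |U x| ≤ B)
    {a b : ℝ} (ha : Tendsto U atBot (𝓝 a)) (hb : Tendsto U atTop (𝓝 b)) (d : ℝ) :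
    Tendsto (fun R => ∫ x in -R..R, (U (x + d) - U x)) atTop (𝓝 (d * (b - a))) := by
  simp_rw [integral_shift_sub_eq hU d]
  have hlim := intervalIntegral.tendsto_integral_filter_of_dominated_convergence
    (μ := volume) (a := 0) (b := d) (l := atTop) (f := fun _ => b - a)
    (F := fun R t => U (t + R) - U (t + -R)) (fun _ => 2 * B)
    (.of_forall fun R => ((hU.comp (continuous_add_const R)).sub
      (hU.comp (continuous_add_const (-R)))).aestronglyMeasurable)
    (.of_forall fun R => .of_forall fun t _ => by
      rw [Real.norm_eq_abs, two_mul]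
      exact (abs_sub _ _).trans (add_le_add (hB _) (hB _)))
    intervalIntegrable_const
    (.of_forall fun t _ => (hb.comp (tendsto_atTop_add_const_left _ t tendsto_id)).sub
      (ha.comp (tendsto_atBot_add_const_left _ t tendsto_neg_atTop_atBot)))
  simpa [mul_sub] using hlim

theorem Dh_eq_sum_shift_sub (α : ℝ) (U : ℝ → ℝ) (x : ℝ) :
    Dh α U x = ((U (x + delta1 α) - U x) + (U (x + -delta1 α) - U x))
      + ((U (x + delta2 α) - U x) + (U (x + -delta2 α) - U x))
      + ((U (x + delta3 α) - U x) + (U (x + -delta3 α) - U x)) := by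
  simp only [Dh, ← sub_eq_add_neg]
  ring

theorem tendsto_integral_Dh (α : ℝ) {U : ℝ → ℝ} (hU : Continuous U) {B : ℝ}
    (hB : ∀ x, |U x| ≤ B) {a b : ℝ} (ha : Tendsto U atBot (𝓝 a)) (hb : Tendsto U atTop (𝓝 b)) :
    Tendsto (fun R => ∫ x in -R..R, Dh α U x) atTop (𝓝 0) := by
  have hi : ∀ (d : ℝ) (R : ℝ), IntervalIntegrable (fun x => U (x + d) - U x) volume (-R) R :=
    fun d R => ((hU.comp (continuous_add_const d)).sub hU).intervalIntegrable _ _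
  have hlim := fun d => tendsto_integral_shift_sub hU hB ha hb d
  have hsum := (((hlim (delta1 α)).add (hlim (-delta1 α))).add
    ((hlim (delta2 α)).add (hlim (-delta2 α)))).add ((hlim (delta3 α)).add (hlim (-delta3 α)))
  convert hsum.congr fun R => ?_ using 2
  · ring
  simp only [Dh_eq_sum_shift_sub]
  rw [intervalIntegral.integral_add (((hi _ R).add (hi _ R)).add ((hi _ R).add (hi _ R)))
      ((hi _ R).add (hi _ R)), intervalIntegral.integral_add ((hi _ R).add (hi _ R))
      ((hi _ R).add (hi _ R)), intervalIntegral.integral_add (hi _ R) (hi _ R),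
    intervalIntegral.integral_add (hi _ R) (hi _ R),
    intervalIntegral.integral_add (hi _ R) (hi _ R)]

theorem not_tendsto_integral_zero_of_nonneg {φ : ℝ → ℝ} (hφ : Continuous φ)
    (hnn : ∀ x, 0 ≤ φ x) {ξ : ℝ} (hpos : 0 < φ ξ) :
    ¬ Tendsto (fun R => ∫ x in -R..R, φ x) atTop (𝓝 0) := by
  intro hlim
  set R₀ := |ξ| + 1
  have hR₀ : 0 < ∫ x in -R₀..R₀, φ x :=
    intervalIntegral.integral_pos (by linarith [abs_nonneg ξ]) hφ.continuousOn
      (fun x _ => hnn x) ⟨ξ, ⟨by linarith [neg_abs_le ξ], by linarith [le_abs_self ξ]⟩, hpos⟩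
  have hmono : ∀ᶠ R in atTop, ∫ x in -R₀..R₀, φ x ≤ ∫ x in -R..R, φ x := by
    filter_upwards [eventually_ge_atTop R₀] with R hR
    exact intervalIntegral.integral_mono_interval (by linarith) (by linarith [abs_nonneg ξ])
      hR (.of_forall hnn) (hφ.intervalIntegrable _ _)
  exact (ge_of_tendsto hlim hmono).not_gt hR₀

theorem neg_six_mul_le_Dh (α : ℝ) {W : ℝ → ℝ} (hW : ∀ x, 0 ≤ W x) (ξ : ℝ) :
    -(6 * W ξ) ≤ Dh α W ξ := by
  simp only [Dh]
  linarith [hW (ξ + delta1 α), hW (ξ - delta1 α), hW (ξ + delta2 α), hW (ξ - delta2 α),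
    hW (ξ + delta3 α), hW (ξ - delta3 α)]

theorem exists_shift_eq_zero_of_Dh_nonpos (α : ℝ) :
    ∃ d ≠ 0, ∀ W : ℝ → ℝ, (∀ x, 0 ≤ W x) → ∀ ξ, W ξ = 0 → Dh α W ξ ≤ 0 →
      W (ξ + d) = 0 ∧ W (ξ - d) = 0 := by
  have hneighbours : ∀ W : ℝ → ℝ, (∀ x, 0 ≤ W x) → ∀ ξ, W ξ = 0 → Dh α W ξ ≤ 0 →
      (W (ξ + delta1 α) = 0 ∧ W (ξ - delta1 α) = 0) ∧
        (W (ξ + delta2 α) = 0 ∧ W (ξ - delta2 α) = 0) := by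
    intro W hW ξ h0 hD
    simp only [Dh] at hD
    refine ⟨⟨?_, ?_⟩, ?_, ?_⟩ <;>
      linarith [hW (ξ + delta1 α), hW (ξ - delta1 α), hW (ξ + delta2 α), hW (ξ - delta2 α),
        hW (ξ + delta3 α), hW (ξ - delta3 α)]
  by_cases hcos : Real.cos α = 0
  · refine ⟨delta2 α, ?_, fun W hW ξ h0 hD => (hneighbours W hW ξ h0 hD).2⟩
    have hsin : Real.sin α ≠ 0 := fun hsin => by
      simpa [hsin, hcos] using Real.sin_sq_add_cos_sq α
    simp only [delta2, hcos, mul_zero, zero_add]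
    positivity
  · exact ⟨delta1 α, hcos, fun W hW ξ h0 hD => (hneighbours W hW ξ h0 hD).1⟩

theorem forall_of_forall_le_of_shift {P : ℝ → Prop} {d : ℝ} (hd : d ≠ 0)
    (hshift : ∀ x, P x → P (x + d) ∧ P (x - d)) {a : ℝ} (ha : ∀ x ≤ a, P x) (x : ℝ) : P x := by
  have hstep : ∀ x, P x → P (x + |d|) := fun x hx => by
    rcases abs_choice d with h | h <;> rw [h]
    exacts [(hshift x hx).1, (hshift x hx).2]
  have hn : ∀ n : ℕ, ∀ y ≤ a + n * |d|, P y := by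
    intro n
    induction n with
    | zero => simpa using ha
    | succ n ih =>
      intro y hy
      simpa using hstep _ (ih (y - |d|) (by push_cast at hy; linarith))
  obtain ⟨n, hn'⟩ := exists_nat_ge ((x - a) / |d|)
  exact hn n x (by linarith [(div_le_iff₀ (abs_pos.2 hd)).1 hn'])

theorem forall_of_forall_ge_of_shift {P : ℝ → Prop} {d : ℝ} (hd : d ≠ 0)
    (hshift : ∀ x, P x → P (x + d) ∧ P (x - d)) {a : ℝ} (ha : ∀ x, a ≤ x → P x) (x : ℝ) :
    P x := by
  simpa using forall_of_forall_le_of_shift (P := fun y => P (-y)) hd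
    (fun y hy => by
      rw [show -(y + d) = -y - d by ring, show -(y - d) = -y + d by ring]
      exact (hshift _ hy).symm)
    (a := -a) (fun y hy => ha _ (by linarith)) (-x)

theorem eq_zero_on_Iic_or_Ici_of_differential_ineq {W : ℝ → ℝ} (hW : Differentiable ℝ W)
    (hnn : ∀ x, 0 ≤ W x) {c K : ℝ} (hc : c ≠ 0) (hineq : ∀ x, 0 ≤ c * deriv W x + K * W x)
    {ξ₀ : ℝ} (h0 : W ξ₀ = 0) : (∀ x ≤ ξ₀, W x = 0) ∨ (∀ x, ξ₀ ≤ x → W x = 0) := by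
  set g : ℝ → ℝ := fun x => exp (K / c * x) * W x
  have hg : ∀ x, HasDerivAt g (exp (K / c * x) * ((c * deriv W x + K * W x) / c)) x := by
    intro x
    have hexp : HasDerivAt (fun x => exp (K / c * x)) (exp (K / c * x) * (K / c)) x := by
      simpa using ((hasDerivAt_id x).const_mul (K / c)).exp
    refine (hexp.mul (hW x).hasDerivAt).congr_deriv ?_
    field_simp
    ring
  have hg0 : g ξ₀ = 0 := by simp [g, h0]
  have hW_of_g : ∀ x, g x ≤ 0 → W x = 0 := fun x hx =>
    le_antisymm (le_of_mul_le_mul_left (by rwa [mul_zero]) (exp_pos _)) (hnn x)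
  rcases hc.lt_or_gt with hc | hc
  · have hanti : Antitone g := antitone_of_deriv_nonpos (fun x => (hg x).differentiableAt)
      fun x => (hg x).deriv ▸ mul_nonpos_of_nonneg_of_nonpos (exp_pos _).le
        (div_nonpos_of_nonneg_of_nonpos (hineq x) hc.le)
    exact .inr fun x hx => hW_of_g x (hg0 ▸ hanti hx)
  · have hmono : Monotone g := monotone_of_deriv_nonneg (fun x => (hg x).differentiableAt)
      fun x => (hg x).deriv ▸ mul_nonneg (exp_pos _).le (div_nonneg (hineq x) hc.le)
    exact .inl fun x hx => hW_of_g x (hg0 ▸ hmono hx)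

namespace FisherKPP

variable {f f' : ℝ → ℝ}

theorem continuousOn (hf : FisherKPP f f') : ContinuousOn f (Icc 0 1) :=
  fun s hs => (hf.1 s hs).continuousAt.continuousWithinAt

theorem nonneg (hf : FisherKPP f f') {s : ℝ} (hs : s ∈ Icc (0 : ℝ) 1) : 0 ≤ f s := by
  obtain ⟨-, -, h0, h1, -, hpos⟩ := hf
  rcases hs.1.eq_or_lt with rfl | hs0
  · exact h0.ge
  rcases hs.2.eq_or_lt with rfl | hs1
  · exact h1.ge
  exact (hpos s ⟨hs0, hs1⟩).1.le

theorem exists_abs_sub_le (hf : FisherKPP f f') :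
    ∃ L, ∀ a ∈ Icc (0 : ℝ) 1, ∀ b ∈ Icc (0 : ℝ) 1, |f b - f a| ≤ L * |b - a| := by
  obtain ⟨L, hL⟩ := isCompact_Icc.exists_bound_of_continuousOn hf.2.1
  exact ⟨L, fun a ha b hb => by
    simpa only [Real.norm_eq_abs] using Convex.norm_image_sub_le_of_norm_hasDerivWithin_le
      (fun s hs => (hf.1 s hs).hasDerivWithinAt) hL (convex_Icc 0 1) ha hb⟩

end FisherKPP

namespace IsTravelingWave

variable {α c : ℝ} {f : ℝ → ℝ} {U : ℝ → ℝ}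

theorem exists_eq_half (hU : IsTravelingWave α f c U) : ∃ ξ, U ξ = 1 / 2 := by
  obtain ⟨hC, -, -, hbot, htop⟩ := hU
  exact mem_range_of_exists_le_of_exists_ge hC.continuous
    (hbot.eventually (ge_mem_nhds (by norm_num))).exists
    (htop.eventually (le_mem_nhds (by norm_num))).exists

theorem speed_ne_zero {f' : ℝ → ℝ} (hf : FisherKPP f f') (hU : IsTravelingWave α f c U) :
    c ≠ 0 := by
  rintro rfl
  obtain ⟨ξ, hξ⟩ := hU.exists_eq_half
  obtain ⟨hC, hrange, heq, hbot, htop⟩ := hU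
  have hφ : Continuous fun x => f (U x) := hf.continuousOn.comp_continuous hC.continuous hrange
  have hB : ∀ x, |U x| ≤ 1 := fun x => abs_le.2 ⟨by linarith [(hrange x).1], (hrange x).2⟩
  have hpos : 0 < f (U ξ) := hξ ▸ (hf.2.2.2.2.2 (1 / 2) ⟨by norm_num, by norm_num⟩).1
  refine not_tendsto_integral_zero_of_nonneg hφ (fun x => hf.nonneg (hrange x)) hpos ?_
  have hD := (tendsto_integral_Dh α hC.continuous hB hbot htop).const_mul (-(1 / 6))
  rw [mul_zero] at hD
  refine hD.congr fun R => ?_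
  rw [← intervalIntegral.integral_const_mul]
  refine intervalIntegral.integral_congr fun x _ => ?_
  linarith [heq x]

variable {U₁ U₂ : ℝ → ℝ}

theorem deriv_sub_eq (hU₁ : IsTravelingWave α f c U₁) (hU₂ : IsTravelingWave α f c U₂) (ξ : ℝ) :
    c * deriv (U₂ - U₁) ξ = (1 / 6) * Dh α (U₂ - U₁) ξ + (f (U₂ ξ) - f (U₁ ξ)) := by
  rw [deriv_sub (hU₂.1.differentiable one_ne_zero ξ) (hU₁.1.differentiable one_ne_zero ξ)]
  have h₁ := hU₁.2.2.1 ξ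
  have h₂ := hU₂.2.2.1 ξ
  simp only [Dh, Pi.sub_apply] at h₁ h₂ ⊢
  linarith

theorem exists_differential_ineq_sub {f' : ℝ → ℝ} (hf : FisherKPP f f')
    (hU₁ : IsTravelingWave α f c U₁) (hU₂ : IsTravelingWave α f c U₂) (hle : ∀ x, U₁ x ≤ U₂ x) :
    ∃ K, ∀ x, 0 ≤ c * deriv (U₂ - U₁) x + K * (U₂ - U₁) x := by
  have hW : ∀ x, 0 ≤ (U₂ - U₁) x := fun x => sub_nonneg.2 (hle x)
  obtain ⟨L, hL⟩ := hf.exists_abs_sub_le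
  refine ⟨1 + L, fun x => ?_⟩
  have hlip : |f (U₂ x) - f (U₁ x)| ≤ L * |(U₂ - U₁) x| := hL _ (hU₁.2.1 x) _ (hU₂.2.1 x)
  rw [abs_of_nonneg (hW x)] at hlip
  linarith [hU₁.deriv_sub_eq hU₂ x, neg_six_mul_le_Dh α hW x, neg_abs_le (f (U₂ x) - f (U₁ x))]

theorem Dh_sub_nonpos_of_eq (hU₁ : IsTravelingWave α f c U₁) (hU₂ : IsTravelingWave α f c U₂)
    (hle : ∀ x, U₁ x ≤ U₂ x) {x : ℝ} (hx : (U₂ - U₁) x = 0) : Dh α (U₂ - U₁) x ≤ 0 := by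
  have hmin : IsLocalMin (U₂ - U₁) x := .of_forall fun y => hx ▸ sub_nonneg.2 (hle y)
  have hfx : f (U₂ x) = f (U₁ x) := by rw [sub_eq_zero.1 hx]
  have heq := hU₁.deriv_sub_eq hU₂ x
  rw [hmin.deriv_eq_zero, hfx, mul_zero, sub_self] at heq
  linarith

end IsTravelingWave

theorem stmt18 (α : ℝ) (f f' : ℝ → ℝ) (hf : FisherKPP f f')
    (c : ℝ) (U₁ U₂ : ℝ → ℝ)
    (hU₁ : IsTravelingWave α f c U₁) (hU₂ : IsTravelingWave α f c U₂)
    (hle : ∀ ξ : ℝ, U₁ ξ ≤ U₂ ξ) :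
    (∀ ξ : ℝ, U₁ ξ = U₂ ξ) ∨ (∀ ξ : ℝ, U₁ ξ < U₂ ξ) := by
  by_cases hstrict : ∀ ξ, U₁ ξ < U₂ ξ
  · exact .inr hstrict
  obtain ⟨ξ₀, hξ₀⟩ := not_forall.1 hstrict
  have hW : ∀ x, 0 ≤ (U₂ - U₁) x := fun x => sub_nonneg.2 (hle x)
  have hW0 : (U₂ - U₁) ξ₀ = 0 := le_antisymm (sub_nonpos.2 (not_lt.1 hξ₀)) (hW ξ₀)
  have hWd := (hU₂.1.differentiable one_ne_zero).sub (hU₁.1.differentiable one_ne_zero)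
  obtain ⟨K, hineq⟩ := hU₁.exists_differential_ineq_sub hf hU₂ hle
  obtain ⟨d, hd, hprop⟩ := exists_shift_eq_zero_of_Dh_nonpos α
  have hshift := fun x hx => hprop (U₂ - U₁) hW x hx (hU₁.Dh_sub_nonpos_of_eq hU₂ hle hx)
  have hzero : ∀ x, (U₂ - U₁) x = 0 := by
    rcases eq_zero_on_Iic_or_Ici_of_differential_ineq hWd hW (hU₁.speed_ne_zero hf) hineq hW0
      with h | h
    exacts [forall_of_forall_le_of_shift hd hshift h, forall_of_forall_ge_of_shift hd hshift h]
  exact .inl fun x => (sub_eq_zero.1 (hzero x)).symm
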